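/- arXiv:1611.04150 — 4 statements merged into one kernel-verified Lean document; each statement's English description precedes it below -/
import Mathlib

section
/- Suppose μ: {1,…,N} → [0,1] satisfies the constraint ∑_{m=0}^{N−1} C(N−1,m)·π_H^m·π_L^(N−1−m)·μ(m+1) ≤ λ with λ ≤ π_L^(N−1), where π_H ∈ (0,1), π_L = 1−π_H. Then the policy μ*(1) = λ/π_L^(N−1), μ*(m) = 0 for m > 1, satisfies the constraint and maximizes the throughput R(μ) = ∑_{m=1}^{N} C(N,m)·π_H^m·π_L^(N−m)·m·μ(m)·(1−μ(m))^(m−1) over all constrained policies. -/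
/-!
The identity `C(N, m) m πH = N πH C(N - 1, m - 1)` rewrites the throughput as
`N πH ∑ C(N - 1, m - 1) πH^(m-1) πL^(N-m) μ m (1 - μ m)^(m-1)`, which is at most
`N πH Q μ ≤ N πH λ` since `(1 - μ m)^(m-1) ≤ 1`. The policy `μ*` transmits only when no collision
is possible and spends the whole budget, so it attains this bound.
-/

open Finset

namespace RandomAccess

noncomputable section

def powerCost (N : ℕ) (piH : ℝ) (μ : ℕ → ℝ) : ℝ :=
  ∑ m ∈ range N, ((N - 1).choose m : ℝ) * piH ^ m * (1 - piH) ^ (N - 1 - m) * μ (m + 1)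

def throughput (N : ℕ) (piH : ℝ) (μ : ℕ → ℝ) : ℝ :=
  ∑ m ∈ Icc 1 N,
    (N.choose m : ℝ) * piH ^ m * (1 - piH) ^ (N - m) * m * μ m * (1 - μ m) ^ (m - 1)

end

theorem choose_succ_mul_pow_mul {R : Type*} [CommSemiring R] (N m : ℕ) (p q : R) :
    (N.choose (m + 1) : R) * p ^ (m + 1) * q ^ (N - (m + 1)) * ((m + 1 : ℕ) : R) =
      N * p * ((N - 1).choose m * p ^ m * q ^ (N - 1 - m)) := by
  cases N with
  | zero => simp
  | succ n =>
    have hchoose : ((n + 1 : ℕ) : R) * n.choose m = (n + 1).choose (m + 1) * ((m + 1 : ℕ) : R) := by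
      rw [← Nat.cast_mul, ← Nat.cast_mul, Nat.add_one_mul_choose_eq]
    rw [Nat.add_sub_add_right, Nat.add_sub_cancel]
    calc _ = ((n + 1).choose (m + 1) * ((m + 1 : ℕ) : R)) * (p ^ (m + 1) * q ^ (n - m)) := by ring
      _ = (((n + 1 : ℕ) : R) * n.choose m) * (p ^ (m + 1) * q ^ (n - m)) := by rw [hchoose]
      _ = _ := by ring

theorem mul_one_sub_pow_le {x : ℝ} (hx : x ∈ Set.Icc (0 : ℝ) 1) (k : ℕ) :
    x * (1 - x) ^ k ≤ x :=
  mul_le_of_le_one_right hx.1 (pow_le_one₀ (by linarith [hx.2]) (by linarith [hx.1]))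

theorem throughput_eq_sum_range (N : ℕ) (piH : ℝ) (μ : ℕ → ℝ) :
    throughput N piH μ = ∑ m ∈ range N,
      (N.choose (m + 1) : ℝ) * piH ^ (m + 1) * (1 - piH) ^ (N - (m + 1)) * ((m + 1 : ℕ) : ℝ) *
        (μ (m + 1) * (1 - μ (m + 1)) ^ m) := by
  rw [throughput, ← Finset.Ico_add_one_right_eq_Icc, Finset.sum_Ico_eq_sum_range,
    Nat.add_sub_cancel]
  refine sum_congr rfl fun m _ => ?_
  rw [add_comm 1 m, Nat.add_sub_cancel]
  ring

theorem throughput_le_mul_powerCost {N : ℕ} {piH : ℝ} (hpiH : piH ∈ Set.Icc (0 : ℝ) 1)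
    {μ : ℕ → ℝ} (hμ : ∀ m ∈ Icc 1 N, μ m ∈ Set.Icc (0 : ℝ) 1) :
    throughput N piH μ ≤ N * piH * powerCost N piH μ := by
  have hpiL : 0 ≤ 1 - piH := by linarith [hpiH.2]
  rw [throughput_eq_sum_range, powerCost, mul_sum]
  refine sum_le_sum fun m hm => ?_
  have hμm := hμ (m + 1) (mem_Icc.mpr ⟨by omega, by simpa using hm⟩)
  set w : ℝ := (N - 1).choose m * piH ^ m * (1 - piH) ^ (N - 1 - m)
  have hw : 0 ≤ N * piH * w := by
    have := hpiH.1
    positivity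
  calc _ = N * piH * w * (μ (m + 1) * (1 - μ (m + 1)) ^ m) := by rw [choose_succ_mul_pow_mul]
    _ ≤ N * piH * w * μ (m + 1) := mul_le_mul_of_nonneg_left (mul_one_sub_pow_le hμm m) hw
    _ = N * piH * (w * μ (m + 1)) := mul_assoc _ _ _

theorem powerCost_ite_eq_one {N : ℕ} (hN : 1 ≤ N) (piH c : ℝ) :
    powerCost N piH (fun m => if m = 1 then c else 0) = (1 - piH) ^ (N - 1) * c := by
  rw [powerCost, sum_eq_single 0 (fun m _ hm => by simp [hm]) (fun h => by simp at h; omega)]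
  simp

theorem throughput_ite_eq_one (N : ℕ) (piH c : ℝ) :
    throughput N piH (fun m => if m = 1 then c else 0) =
      N * piH * ((1 - piH) ^ (N - 1) * c) := by
  rw [throughput, sum_eq_single 1 (fun m _ hm => by simp [hm])]
  · simp only [if_true, Nat.choose_one_right, Nat.sub_self, pow_zero, pow_one, Nat.cast_one]
    ring
  · intro h
    obtain rfl : N = 0 := by simp at h; omega
    simp

end RandomAccess

open RandomAccess in
theorem stmt6_general (N : ℕ) (hN : 1 ≤ N) (piH lam : ℝ) (hpiH : piH ∈ Set.Ioo (0:ℝ) 1) :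
    let piL : ℝ := 1 - piH
    let Q : (ℕ → ℝ) → ℝ := fun μ => ∑ m ∈ Finset.range N,
      ((N - 1).choose m : ℝ) * piH ^ m * piL ^ (N - 1 - m) * μ (m + 1)
    let R : (ℕ → ℝ) → ℝ := fun μ => ∑ m ∈ Finset.Icc 1 N,
      (N.choose m : ℝ) * piH ^ m * piL ^ (N - m) * m * μ m * (1 - μ m) ^ (m - 1)
    let μstar : ℕ → ℝ := fun m => if m = 1 then lam / piL ^ (N - 1) else 0
    Q μstar ≤ lam ∧
    ∀ μ : ℕ → ℝ, (∀ m ∈ Finset.Icc 1 N, μ m ∈ Set.Icc (0:ℝ) 1) → Q μ ≤ lam →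
      R μ ≤ R μstar := by
  intro piL Q R μstar
  have hQ : Q = powerCost N piH := rfl
  have hR : R = throughput N piH := rfl
  have hpow : piL ^ (N - 1) ≠ 0 := pow_ne_zero _ (sub_ne_zero.mpr hpiH.2.ne')
  have hscale : piL ^ (N - 1) * (lam / piL ^ (N - 1)) = lam := mul_div_cancel₀ lam hpow
  refine ⟨by rw [hQ, powerCost_ite_eq_one hN, hscale], fun μ hμ hQμ => ?_⟩
  have hNpiH : (0 : ℝ) ≤ N * piH := mul_nonneg N.cast_nonneg hpiH.1.le
  calc R μ ≤ N * piH * Q μ := throughput_le_mul_powerCost (Set.Ioo_subset_Icc_self hpiH) hμ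
    _ ≤ N * piH * lam := mul_le_mul_of_nonneg_left hQμ hNpiH
    _ = R μstar := by rw [hR, throughput_ite_eq_one, hscale]

/-- Small-harvesting regime: when `λ ≤ π_L^(N−1)`, the policy transmitting only
when a single node is active, with probability `λ/π_L^(N−1)`, satisfies the
average-power constraint and maximizes the throughput among all constrained
policies. -/
theorem stmt6 (N : ℕ) (hN : 1 ≤ N) (piH lam : ℝ) (hpiH : piH ∈ Set.Ioo (0:ℝ) 1)
    (hlam0 : 0 ≤ lam) (hlam : lam ≤ (1 - piH) ^ (N - 1)) :
    let piL : ℝ := 1 - piH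
    let Q : (ℕ → ℝ) → ℝ := fun μ => ∑ m ∈ Finset.range N,
      ((N - 1).choose m : ℝ) * piH ^ m * piL ^ (N - 1 - m) * μ (m + 1)
    let R : (ℕ → ℝ) → ℝ := fun μ => ∑ m ∈ Finset.Icc 1 N,
      (N.choose m : ℝ) * piH ^ m * piL ^ (N - m) * m * μ m * (1 - μ m) ^ (m - 1)
    let μstar : ℕ → ℝ := fun m => if m = 1 then lam / piL ^ (N - 1) else 0
    Q μstar ≤ lam ∧
    ∀ μ : ℕ → ℝ, (∀ m ∈ Finset.Icc 1 N, μ m ∈ Set.Icc (0:ℝ) 1) → Q μ ≤ lam →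
      R μ ≤ R μstar :=
  stmt6_general N hN piH lam hpiH
end

section
/- If λ ≥ (1 − π_L^N)/(N·π_H) (with π_H ∈ (0,1), π_L = 1−π_H, N ≥ 1), then the policy μ*(m) = 1/m for all 1 ≤ m ≤ N maximizes R(μ) = ∑_{m=1}^{N} C(N,m)·π_H^m·π_L^(N−m)·m·μ(m)·(1−μ(m))^(m−1) over all policies μ: {1,…,N} → [0,1], and it satisfies the constraint ∑_{m=0}^{N−1} C(N−1,m)·π_H^m·π_L^(N−1−m)·μ(m+1) ≤ λ. -/
/-!
The throughput is a nonnegative combination of the terms `μ m * (1 - μ m) ^ (m - 1)`, each of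
which is maximized on `[0, 1]` at `μ m = 1 / m` (Bernoulli's inequality), so `μ*` maximizes
`R` termwise. Under `μ*` the power constraint is `∑ C(N-1,m) π_H^m π_L^(N-1-m) / (m+1)`, and
`N * C(N-1,m) = (m+1) * C(N,m+1)` turns `N π_H` times it into the binomial expansion of
`(π_H + π_L)^N = 1` without its `m = 0` term, i.e. `1 - π_L^N`.
-/

open Finset

theorem mul_one_sub_pow_pred_le {m : ℕ} (hm : 1 ≤ m) {x : ℝ} (hx : x ∈ Set.Icc (0 : ℝ) 1) :
    x * (1 - x) ^ (m - 1) ≤ 1 / m * (1 - 1 / m) ^ (m - 1) := by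
  obtain ⟨n, rfl⟩ := Nat.exists_eq_add_of_le' hm
  rcases n.eq_zero_or_pos with rfl | hn
  · simpa using hx.2
  set y : ℝ := 1 / ((n + 1 : ℕ) : ℝ)
  have hy : ((n : ℝ) + 1) * y = 1 := by simp [y]; field_simp
  have hy1 : y ≤ 1 := by simp only [y]; rw [div_le_one (by positivity)]; simp
  -- Bernoulli at `(1 - x) + (x - y)`; the choice `y = 1 / (n + 1)` cancels the constant terms.
  have bernoulli := pow_add_mul_le_add_pow (a := 1 - x) (b := x - y) (n := n + 1)
    (by linarith [hx.2]) (by linarith [hx.2])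
  simp only [Nat.add_sub_cancel, sub_add_sub_cancel, pow_succ, Nat.cast_add_one] at bernoulli ⊢
  have key : n * (x * (1 - x) ^ n) ≤ n * (y * (1 - y) ^ n) :=
    calc n * (x * (1 - x) ^ n) = (1 - x) ^ n * (1 - x) + (n + 1) * (1 - x) ^ n * (x - y) := by
          linear_combination (1 - x) ^ n * hy
      _ ≤ (1 - y) ^ n * (1 - y) := bernoulli
      _ = n * (y * (1 - y) ^ n) := by linear_combination -(1 - y) ^ n * hy
  exact le_of_mul_le_mul_left key (by exact_mod_cast hn)

theorem succ_mul_sum_choose_mul_pow_div_succ (p q : ℝ) (n : ℕ) :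
    ((n + 1 : ℕ) : ℝ) * p * ∑ m ∈ range (n + 1),
        (n.choose m : ℝ) * p ^ m * q ^ (n - m) * (1 / ((m + 1 : ℕ) : ℝ)) =
      (p + q) ^ (n + 1) - q ^ (n + 1) := by
  rw [add_pow, sum_range_succ' _ (n + 1), eq_sub_iff_add_eq, mul_sum]
  simp only [pow_zero, one_mul, Nat.sub_zero, Nat.choose_zero_right, Nat.cast_one, mul_one]
  congr 1
  refine sum_congr rfl fun m _ => ?_
  have hchoose : ((n + 1 : ℕ) : ℝ) * n.choose m = (n + 1).choose (m + 1) * ((m + 1 : ℕ) : ℝ) := by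
    exact_mod_cast Nat.add_one_mul_choose_eq n m
  rw [Nat.add_sub_add_right]
  field_simp
  linear_combination p ^ (m + 1) * q ^ (n - m) * hchoose

/-- Large-harvesting regime: when `λ ≥ (1 − π_L^N)/(N·π_H)`, the policy
`μ*(m) = 1/m` maximizes the throughput over all policies with values in `[0,1]`
and satisfies the average-power constraint. -/
theorem stmt7 (N : ℕ) (hN : 1 ≤ N) (piH lam : ℝ) (hpiH : piH ∈ Set.Ioo (0:ℝ) 1)
    (hlam : (1 - (1 - piH) ^ N) / (N * piH) ≤ lam) :
    let piL : ℝ := 1 - piH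
    let Q : (ℕ → ℝ) → ℝ := fun μ => ∑ m ∈ Finset.range N,
      ((N - 1).choose m : ℝ) * piH ^ m * piL ^ (N - 1 - m) * μ (m + 1)
    let R : (ℕ → ℝ) → ℝ := fun μ => ∑ m ∈ Finset.Icc 1 N,
      (N.choose m : ℝ) * piH ^ m * piL ^ (N - m) * m * μ m * (1 - μ m) ^ (m - 1)
    let μstar : ℕ → ℝ := fun m => 1 / m
    Q μstar ≤ lam ∧
    ∀ μ : ℕ → ℝ, (∀ m ∈ Finset.Icc 1 N, μ m ∈ Set.Icc (0:ℝ) 1) →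
      R μ ≤ R μstar := by
  intro piL Q R μstar
  obtain ⟨hpiH0, hpiH1⟩ := hpiH
  obtain ⟨n, rfl⟩ := Nat.exists_eq_add_of_le' hN
  refine ⟨?_, fun μ hμ => sum_le_sum fun m hm => ?_⟩
  · have hsum := succ_mul_sum_choose_mul_pow_div_succ piH piL n
    rw [add_sub_cancel, one_pow] at hsum
    have hQ : Q μstar = (1 - piL ^ (n + 1)) / ((n + 1 : ℕ) * piH) := by
      rw [eq_div_iff (by positivity), mul_comm, ← hsum]
      simp only [Q, μstar, Nat.add_sub_cancel]
    exact hQ ▸ hlam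
  · have hweight : 0 ≤ ((n + 1).choose m : ℝ) * piH ^ m * piL ^ (n + 1 - m) * m := by
      have : 0 ≤ piL := by simp only [piL]; linarith
      positivity
    have hpeak := mul_le_mul_of_nonneg_left
      (mul_one_sub_pow_pred_le (mem_Icc.mp hm).1 (hμ m hm)) hweight
    simpa only [μstar, mul_assoc] using hpeak
end

section
/- Any policy μ: {1,…,N} → [0,1] with μ(m₀) > 1/m₀ for some m₀ ≥ 2 is strictly dominated: replacing μ(m₀) by 1/m₀ strictly increases the throughput R(μ) and strictly decreases the average power Q(μ). -/
/-!
Both `R` and `Q` are sums with one term per value of `μ`, and changing `μ(m₀)` only moves the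
term of index `m₀` (in `Q`, the term of index `m₀ - 1`). In `Q` that term is a positive multiple
of `μ(m₀)`, so lowering `μ(m₀)` lowers `Q`. In `R` it is a positive multiple of
`x (1 - x)^(m₀ - 1)` at `x = μ(m₀)`; this function has derivative
`(1 - x)^(m₀ - 2) (1 - m₀ x)`, so it is strictly decreasing on `[1/m₀, 1]`,
and moving `x` down to `1/m₀` raises `R`.
-/

open Finset Function

theorem Finset.sum_lt_sum_of_lt_of_eq_of_ne {ι M : Type*} [AddCommMonoid M] [Preorder M]
    [IsOrderedCancelAddMonoid M] [AddLeftStrictMono M] {s : Finset ι} {f g : ι → M} {i : ι}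
    (hi : i ∈ s) (hfg : ∀ j ∈ s, j ≠ i → f j = g j) (hlt : f i < g i) :
    ∑ j ∈ s, f j < ∑ j ∈ s, g j := by
  refine Finset.sum_lt_sum (fun j hj => ?_) ⟨i, hi, hlt⟩
  rcases eq_or_ne j i with rfl | hji
  · exact hlt.le
  · exact (hfg j hj hji).le

theorem hasDerivAt_mul_one_sub_pow_succ (k : ℕ) (x : ℝ) :
    HasDerivAt (fun y : ℝ => y * (1 - y) ^ (k + 1)) ((1 - x) ^ k * (1 - (k + 1 + 1) * x)) x := by
  refine ((hasDerivAt_id' x).fun_mul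
    (((hasDerivAt_id' x).const_sub 1).fun_pow (k + 1))).congr_deriv ?_
  rw [Nat.add_sub_cancel]
  push_cast
  ring

theorem strictAntiOn_mul_one_sub_pow {m : ℕ} (hm : 2 ≤ m) :
    StrictAntiOn (fun x : ℝ => x * (1 - x) ^ (m - 1)) (Set.Icc (1 / m) 1) := by
  obtain ⟨k, rfl⟩ : ∃ k, m = k + 1 + 1 := ⟨m - 2, by omega⟩
  simp only [Nat.add_sub_cancel]
  refine strictAntiOn_of_deriv_neg (convex_Icc _ _) (by fun_prop) fun x hx => ?_
  rw [interior_Icc] at hx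
  rw [(hasDerivAt_mul_one_sub_pow_succ k x).deriv]
  have hmx : 1 < ((k + 1 + 1 : ℕ) : ℝ) * x := by
    rw [← div_lt_iff₀' (by positivity)]; exact hx.1
  push_cast at hmx
  exact mul_neg_of_pos_of_neg (pow_pos (by linarith [hx.2]) _) (by linarith)

theorem mul_one_sub_pow_lt_of_inv_lt {m : ℕ} (hm : 2 ≤ m) {x : ℝ} (hx : 1 / (m : ℝ) < x)
    (hx1 : x ≤ 1) : x * (1 - x) ^ (m - 1) < 1 / m * (1 - 1 / m) ^ (m - 1) := by
  have hinv : 1 / (m : ℝ) ≤ 1 := by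
    rw [div_le_one (by positivity)]; exact_mod_cast (by omega : 1 ≤ m)
  exact strictAntiOn_mul_one_sub_pow hm ⟨le_rfl, hinv⟩ ⟨hx.le, hx1⟩ hx

theorem stmt8_general (N m₀ : ℕ) (hm₀ : 2 ≤ m₀) (hm₀N : m₀ ≤ N)
    (piH : ℝ) (hpiH : piH ∈ Set.Ioo (0:ℝ) 1)
    (μ : ℕ → ℝ) (hμ : ∀ m ∈ Finset.Icc 1 N, μ m ∈ Set.Icc (0:ℝ) 1)
    (hbig : 1 / (m₀ : ℝ) < μ m₀) :
    let piL : ℝ := 1 - piH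
    let Q : (ℕ → ℝ) → ℝ := fun ν => ∑ m ∈ Finset.range N,
      ((N - 1).choose m : ℝ) * piH ^ m * piL ^ (N - 1 - m) * ν (m + 1)
    let R : (ℕ → ℝ) → ℝ := fun ν => ∑ m ∈ Finset.Icc 1 N,
      (N.choose m : ℝ) * piH ^ m * piL ^ (N - m) * m * ν m * (1 - ν m) ^ (m - 1)
    let μ' : ℕ → ℝ := Function.update μ m₀ (1 / m₀)
    R μ < R μ' ∧ Q μ' < Q μ := by
  intro piL Q R μ'
  have hH : 0 < piH := hpiH.1
  have hL : 0 < piL := sub_pos.2 hpiH.2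
  have hm₀mem : m₀ ∈ Icc 1 N := mem_Icc.2 ⟨by omega, hm₀N⟩
  constructor
  · refine sum_lt_sum_of_lt_of_eq_of_ne hm₀mem
      (fun j _ hj => by simp only [μ', update_of_ne hj]) ?_
    have hc : 0 < (N.choose m₀ : ℝ) * piH ^ m₀ * piL ^ (N - m₀) * m₀ := by
      have := Nat.choose_pos hm₀N; positivity
    have := mul_lt_mul_of_pos_left
      (mul_one_sub_pow_lt_of_inv_lt hm₀ hbig (hμ m₀ hm₀mem).2) hc
    simp only [μ', update_self]
    linarith
  · refine sum_lt_sum_of_lt_of_eq_of_ne (i := m₀ - 1) (mem_range.2 (by omega))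
      (fun j _ hj => by simp only [μ', update_of_ne (show j + 1 ≠ m₀ by omega)]) ?_
    have hc :
        0 < ((N - 1).choose (m₀ - 1) : ℝ) * piH ^ (m₀ - 1) * piL ^ (N - 1 - (m₀ - 1)) := by
      have := Nat.choose_pos (show m₀ - 1 ≤ N - 1 by omega); positivity
    simp only [μ', Nat.sub_add_cancel (by omega : 1 ≤ m₀), update_self]
    exact mul_lt_mul_of_pos_left hbig hc

/-- Any policy with `μ(m₀) > 1/m₀` for some `m₀ ≥ 2` is strictly dominated:
replacing `μ(m₀)` by `1/m₀` strictly increases the throughput `R` and strictly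
decreases the average power `Q`. -/
theorem stmt8 (N m₀ : ℕ) (hN : 2 ≤ N) (hm₀ : 2 ≤ m₀) (hm₀N : m₀ ≤ N)
    (piH : ℝ) (hpiH : piH ∈ Set.Ioo (0:ℝ) 1)
    (μ : ℕ → ℝ) (hμ : ∀ m ∈ Finset.Icc 1 N, μ m ∈ Set.Icc (0:ℝ) 1)
    (hbig : 1 / (m₀ : ℝ) < μ m₀) :
    let piL : ℝ := 1 - piH
    let Q : (ℕ → ℝ) → ℝ := fun ν => ∑ m ∈ Finset.range N,
      ((N - 1).choose m : ℝ) * piH ^ m * piL ^ (N - 1 - m) * ν (m + 1)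
    let R : (ℕ → ℝ) → ℝ := fun ν => ∑ m ∈ Finset.Icc 1 N,
      (N.choose m : ℝ) * piH ^ m * piL ^ (N - m) * m * ν m * (1 - ν m) ^ (m - 1)
    let μ' : ℕ → ℝ := Function.update μ m₀ (1 / m₀)
    R μ < R μ' ∧ Q μ' < Q μ :=
  stmt8_general N m₀ hm₀ hm₀N piH hpiH μ hμ hbig
end

section
/- For π_H ∈ (0,1), π_L = 1−π_H, N ≥ 2, and π_L^(N−1) < λ < (1−π_L^N)/(N·π_H), there exists a unique φ ∈ (0,1) such that the policy μ^(φ) with μ^(φ)(1)=1 and μ^(φ)(m) the unique solution in (0,1/m) of (1−u)^(m−2)(1−m·u)=φ for m≥2 satisfies ∑_{m=0}^{N−1} C(N−1,m)·π_H^m·π_L^(N−1−m)·μ^(φ)(m+1) = λ. -/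
/-!
For each `m ≥ 2` the map `u ↦ (1 - u)^(m-2) (1 - m u)` is a continuous strictly decreasing
bijection of `[0, 1/m]` onto `[0, 1]`, so its inverse `φ ↦ μ^(φ)(m)` is continuous and strictly
decreasing, running from `1/m` at `φ = 0` to `0` at `φ = 1`. Hence the average power
`Q(φ) = ∑ C(N-1,m) π_H^m π_L^(N-1-m) μ^(φ)(m+1)` is continuous and strictly decreasing on
`[0, 1]`, with `Q(1) = π_L^(N-1)` and, by the identity `N C(N-1,m) / (m+1) = C(N,m+1)` and the
binomial theorem, `Q(0) = (1 - π_L^N) / (N π_H)`. The intermediate value theorem gives `φ`,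
strict monotonicity its uniqueness.
-/

open Set

theorem mul_sum_choose_mul_pow_div_succ (p q : ℝ) (N : ℕ) :
    N * p * ∑ m ∈ Finset.range N,
        ((N - 1).choose m : ℝ) * p ^ m * q ^ (N - 1 - m) * ((m : ℝ) + 1)⁻¹
      = (p + q) ^ N - q ^ N := by
  cases N with
  | zero => simp
  | succ n =>
    have hchoose (m : ℕ) : ((n + 1 : ℕ) : ℝ) * (n.choose m : ℝ) * ((m : ℝ) + 1)⁻¹
        = ((n + 1).choose (m + 1) : ℝ) := by
      rw [← Nat.cast_mul, Nat.add_one_mul_choose_eq]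
      push_cast
      field_simp
    rw [add_pow, Finset.sum_range_succ' _ (n + 1), Finset.mul_sum]
    simp only [Nat.add_sub_cancel, Nat.add_sub_add_right, pow_zero, one_mul, Nat.choose_zero_right,
      Nat.cast_one, mul_one, Nat.sub_zero, add_sub_cancel_right]
    refine Finset.sum_congr rfl fun m _ => ?_
    rw [← hchoose]
    ring

def rootFun (m : ℕ) (u : ℝ) : ℝ := (1 - u) ^ (m - 2) * (1 - m * u)

section RootFun

variable {m : ℕ}

theorem continuous_rootFun (m : ℕ) : Continuous (rootFun m) := by
  unfold rootFun; fun_prop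

@[simp]
theorem rootFun_zero (m : ℕ) : rootFun m 0 = 1 := by simp [rootFun]

theorem rootFun_inv_self (hm : m ≠ 0) : rootFun m (m : ℝ)⁻¹ = 0 := by
  simp [rootFun, hm]

theorem strictAntiOn_rootFun (hm : 2 ≤ m) : StrictAntiOn (rootFun m) (Icc 0 (m : ℝ)⁻¹) := by
  have hm0 : (0 : ℝ) < m := by positivity
  have hinv : (m : ℝ)⁻¹ < 1 := inv_lt_one_of_one_lt₀ (by exact_mod_cast hm)
  intro u hu v hv huv
  have hmv : m * v ≤ 1 := by simpa [hm0.ne'] using mul_le_mul_of_nonneg_left hv.2 hm0.le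
  calc rootFun m v ≤ (1 - u) ^ (m - 2) * (1 - m * v) := by
        unfold rootFun
        gcongr
        linarith [hv.2]
    _ < rootFun m u := by
        unfold rootFun
        have : 0 < (1 - u) ^ (m - 2) := pow_pos (by linarith [hu.2]) _
        gcongr

theorem image_neg_rootFun (hm : 2 ≤ m) :
    (fun u => -rootFun m u) '' Icc 0 (m : ℝ)⁻¹ = Icc (-1) 0 := by
  have h := (continuous_rootFun m).neg.continuousOn.image_Icc_of_monotoneOn
    (inv_nonneg.2 m.cast_nonneg) (strictAntiOn_rootFun hm).neg.monotoneOn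
  simpa [rootFun_inv_self (by omega : m ≠ 0)] using h

-- Negated so that the inverse is an order isomorphism, hence automatically continuous.
noncomputable def rootIso (hm : 2 ≤ m) : Icc (0 : ℝ) (m : ℝ)⁻¹ ≃o Icc (-1 : ℝ) 0 :=
  ((strictAntiOn_rootFun hm).neg.orderIso _ _).trans (.setCongr _ _ (image_neg_rootFun hm))

end RootFun

-- The value `1` for `m < 2` makes `policy 1 φ = μ^(φ)(1) = 1` hold definitionally.
noncomputable def policy (m : ℕ) (φ : ℝ) : ℝ :=
  if hm : 2 ≤ m then (rootIso hm).symm (projIcc (-1) 0 (by norm_num) (-φ)) else 1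

section Policy

variable {m : ℕ} {φ : ℝ}

@[simp]
theorem policy_one (φ : ℝ) : policy 1 φ = 1 := rfl

theorem policy_mem_Icc (hm : 2 ≤ m) (φ : ℝ) : policy m φ ∈ Icc 0 (m : ℝ)⁻¹ := by
  rw [policy, dif_pos hm]; exact Subtype.property _

theorem rootFun_policy (hm : 2 ≤ m) (hφ : φ ∈ Icc 0 1) : rootFun m (policy m φ) = φ := by
  have hφ' : -φ ∈ Icc (-1 : ℝ) 0 := ⟨by linarith [hφ.2], by linarith [hφ.1]⟩
  have h := congrArg Subtype.val ((rootIso hm).apply_symm_apply ⟨-φ, hφ'⟩)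
  rw [policy, dif_pos hm, projIcc_of_mem _ hφ']
  exact neg_injective h

theorem eq_policy_of_rootFun_eq (hm : 2 ≤ m) (hφ : φ ∈ Icc 0 1) {u : ℝ}
    (hu : u ∈ Icc 0 (m : ℝ)⁻¹) (h : rootFun m u = φ) : u = policy m φ :=
  (strictAntiOn_rootFun hm).injOn hu (policy_mem_Icc hm φ) (by rw [h, rootFun_policy hm hφ])

theorem continuous_policy (m : ℕ) : Continuous (policy m) := by
  unfold policy
  split_ifs with hm
  · exact continuous_subtype_val.comp
      ((rootIso hm).symm.continuous.comp (continuous_projIcc.comp continuous_neg))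
  · exact continuous_const

theorem strictAntiOn_policy (hm : 2 ≤ m) : StrictAntiOn (policy m) (Icc 0 1) := by
  intro φ hφ ψ hψ hφψ
  by_contra! h
  have := (strictAntiOn_rootFun hm).antitoneOn (policy_mem_Icc hm φ) (policy_mem_Icc hm ψ) h
  rw [rootFun_policy hm hφ, rootFun_policy hm hψ] at this
  linarith

theorem policy_at_zero (hm : m ≠ 0) : policy m 0 = (m : ℝ)⁻¹ := by
  rcases (by omega : m = 1 ∨ 2 ≤ m) with rfl | hm
  · simp
  · exact (eq_policy_of_rootFun_eq hm (by simp) ⟨by positivity, le_rfl⟩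
      (rootFun_inv_self (by omega))).symm

theorem policy_at_one (hm : 2 ≤ m) : policy m 1 = 0 :=
  (eq_policy_of_rootFun_eq hm (by simp) ⟨le_rfl, by positivity⟩ (rootFun_zero m)).symm

theorem policy_mem_Ioo (hm : 2 ≤ m) (hφ : φ ∈ Ioo 0 1) : policy m φ ∈ Ioo 0 (m : ℝ)⁻¹ := by
  have hroot := rootFun_policy hm (Ioo_subset_Icc_self hφ)
  obtain ⟨h0, h1⟩ := policy_mem_Icc hm φ
  refine ⟨h0.lt_of_ne ?_, h1.lt_of_ne ?_⟩ <;> rintro h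
  · rw [← h, rootFun_zero] at hroot; exact hφ.2.ne hroot.symm
  · rw [h, rootFun_inv_self (by omega)] at hroot; exact hφ.1.ne hroot

end Policy

noncomputable def expectedPower (N : ℕ) (piH φ : ℝ) : ℝ :=
  ∑ m ∈ Finset.range N,
    ((N - 1).choose m : ℝ) * piH ^ m * (1 - piH) ^ (N - 1 - m) * policy (m + 1) φ

section ExpectedPower

variable {N : ℕ} {piH : ℝ}

theorem continuous_expectedPower (N : ℕ) (piH : ℝ) : Continuous (expectedPower N piH) :=
  continuous_finsetSum _ fun m _ => continuous_const.mul (continuous_policy (m + 1))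

theorem strictAntiOn_expectedPower (hN : 2 ≤ N) (hpiH : piH ∈ Ioo 0 1) :
    StrictAntiOn (expectedPower N piH) (Icc 0 1) := by
  have hcoeff : ∀ m ∈ Finset.range N,
      0 < ((N - 1).choose m : ℝ) * piH ^ m * (1 - piH) ^ (N - 1 - m) :=
    fun m hm => mul_pos (mul_pos (Nat.cast_pos.2 (Nat.choose_pos (by grind)))
      (pow_pos hpiH.1 _)) (pow_pos (sub_pos.2 hpiH.2) _)
  intro φ hφ ψ hψ hφψ
  apply Finset.sum_lt_sum
  · intro m hm
    gcongr _ * ?_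
    · exact (hcoeff m hm).le
    rcases Nat.eq_zero_or_pos m with rfl | hm0
    · simp
    · exact (strictAntiOn_policy (by omega) hφ hψ hφψ).le
  · have h1 : 1 ∈ Finset.range N := Finset.mem_range.2 (by omega)
    exact ⟨1, h1, mul_lt_mul_of_pos_left (strictAntiOn_policy le_rfl hφ hψ hφψ) (hcoeff 1 h1)⟩

theorem expectedPower_one (hN : N ≠ 0) : expectedPower N piH 1 = (1 - piH) ^ (N - 1) := by
  rw [expectedPower, Finset.sum_eq_single_of_mem 0 (Finset.mem_range.2 (by omega))]
  · simp
  · intro m _ hm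
    rw [policy_at_one (by omega), mul_zero]

theorem expectedPower_zero (hpiH : piH ≠ 0) :
    expectedPower N piH 0 = (1 - (1 - piH) ^ N) / (N * piH) := by
  rcases eq_or_ne N 0 with rfl | hN
  · simp [expectedPower]
  have hbinom := mul_sum_choose_mul_pow_div_succ piH (1 - piH) N
  rw [add_sub_cancel, one_pow] at hbinom
  rw [eq_div_iff (by positivity), mul_comm, ← hbinom, expectedPower]
  congr 1
  refine Finset.sum_congr rfl fun m _ => ?_
  rw [policy_at_zero m.succ_ne_zero, Nat.cast_succ]

theorem sum_eq_expectedPower {φ : ℝ} (hφ : φ ∈ Icc 0 1) {u : ℕ → ℝ} (hu1 : u 1 = 1)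
    (hroot : ∀ m : ℕ, 2 ≤ m → m ≤ N →
      u m ∈ Ioo (0 : ℝ) (1 / m) ∧ (1 - u m) ^ (m - 2) * (1 - m * u m) = φ) :
    ∑ m ∈ Finset.range N, ((N - 1).choose m : ℝ) * piH ^ m * (1 - piH) ^ (N - 1 - m) * u (m + 1)
      = expectedPower N piH φ := by
  refine Finset.sum_congr rfl fun m hm => ?_
  rcases Nat.eq_zero_or_pos m with rfl | hm0
  · simp [hu1]
  · obtain ⟨hu, hu_root⟩ := hroot (m + 1) (by omega) (by grind)
    rw [one_div] at hu
    rw [eq_policy_of_rootFun_eq (by omega) hφ (Ioo_subset_Icc_self hu) hu_root]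

end ExpectedPower

/-- Intermediate regime: for `π_L^(N−1) < λ < (1−π_L^N)/(N·π_H)` there is a
unique `φ ∈ (0,1)` such that the policy `μ^(φ)` (with `μ^(φ)(1) = 1` and
`μ^(φ)(m)` the unique root in `(0,1/m)` of `(1−u)^(m−2)(1−m·u) = φ` for
`m ≥ 2`) meets the average-power constraint with equality. -/
theorem stmt10 (N : ℕ) (hN : 2 ≤ N) (piH lam : ℝ) (hpiH : piH ∈ Set.Ioo (0:ℝ) 1)
    (hlam₁ : (1 - piH) ^ (N - 1) < lam)
    (hlam₂ : lam < (1 - (1 - piH) ^ N) / (N * piH)) :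
    ∃! φ : ℝ, φ ∈ Set.Ioo (0:ℝ) 1 ∧ ∃ u : ℕ → ℝ, u 1 = 1 ∧
      (∀ m : ℕ, 2 ≤ m → m ≤ N →
        u m ∈ Set.Ioo (0:ℝ) (1 / m) ∧ (1 - u m) ^ (m - 2) * (1 - m * u m) = φ) ∧
      ∑ m ∈ Finset.range N,
        ((N - 1).choose m : ℝ) * piH ^ m * (1 - piH) ^ (N - 1 - m) * u (m + 1) = lam := by
  have hlam : lam ∈ Ioo (expectedPower N piH 1) (expectedPower N piH 0) := by
    rw [expectedPower_one (by omega), expectedPower_zero hpiH.1.ne']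
    exact ⟨hlam₁, hlam₂⟩
  obtain ⟨φ, hφ, hφlam⟩ :=
    intermediate_value_Ioo' zero_le_one (continuous_expectedPower N piH).continuousOn hlam
  refine ⟨φ, ⟨hφ, fun m => policy m φ, policy_one φ, fun m hm _ => ?_, hφlam⟩, ?_⟩
  · rw [one_div]
    exact ⟨policy_mem_Ioo hm hφ, rootFun_policy hm (Ioo_subset_Icc_self hφ)⟩
  · rintro ψ ⟨hψ, u, hu1, hroot, hsum⟩
    refine (strictAntiOn_expectedPower hN hpiH).injOn (Ioo_subset_Icc_self hψ)
      (Ioo_subset_Icc_self hφ) ?_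
    rw [← sum_eq_expectedPower (Ioo_subset_Icc_self hψ) hu1 hroot, hsum, hφlam]
end
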